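/- arXiv:1907.12998 — 2 statements merged into one kernel-verified Lean document; each statement's English description precedes it below -/
import Mathlib

section
/- Let h : ℝ^p → ℝ^p be a homeomorphism. Define y : ℝ^p × [0,1] → ℝ^{2p} by y(x,τ) = (x + f(τ)·δ_x, g(τ)·δ_x), where δ_x = h(x) - x, f(τ) = (1 - cos(πτ))/2, and g(τ) = 1 - cos(2πτ). Then for all x, x' ∈ ℝ^p and all τ ∈ (0,1), y(x,τ) = y(x',τ) implies x = x'. -/
open Real

theorem injective_add_smul_displacement_prod_smul_displacement {K M : Type*} [DivisionRing K]
    [AddCommGroup M] [Module K M] (F : M → M) (a : K) {b : K} (hb : b ≠ 0) :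
    Function.Injective fun x => (x + a • (F x - x), b • (F x - x)) := by
  intro x x' heq
  obtain ⟨hfst, hsnd⟩ := Prod.mk.inj heq
  have hδ : F x - x = F x' - x' := smul_right_injective M hb hsnd
  rw [hδ] at hfst
  exact add_right_cancel hfst

theorem one_sub_cos_two_pi_mul_pos {τ : ℝ} (hτ : τ ∈ Set.Ioo (0 : ℝ) 1) :
    0 < 1 - cos (2 * π * τ) := by
  have hsin : 0 < sin (π * τ) :=
    sin_pos_of_pos_of_lt_pi (mul_pos pi_pos hτ.1) (mul_lt_of_lt_one_right pi_pos hτ.2)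
  have hdouble : 1 - cos (2 * π * τ) = 2 * sin (π * τ) ^ 2 := by
    rw [mul_assoc, cos_two_mul, cos_sq']
    ring
  rw [hdouble]
  exact mul_pos two_pos (pow_pos hsin 2)

/-- Non-intersection of the embedding paths: for a homeomorphism `h` of `ℝ^p`,
the paths `y(x,τ) = (x + f(τ)·δ_x, g(τ)·δ_x)` in `ℝ^{2p}` starting from distinct
points never coincide at the same intermediate time `τ ∈ (0,1)`. -/
theorem embedding_paths_no_intersection (p : ℕ)
    (h : EuclideanSpace ℝ (Fin p) ≃ₜ EuclideanSpace ℝ (Fin p))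
    (x x' : EuclideanSpace ℝ (Fin p)) (τ : ℝ) (hτ : τ ∈ Set.Ioo (0 : ℝ) 1)
    (heq :
      (x + ((1 - Real.cos (Real.pi * τ)) / 2) • (h x - x),
        (1 - Real.cos (2 * Real.pi * τ)) • (h x - x)) =
      (x' + ((1 - Real.cos (Real.pi * τ)) / 2) • (h x' - x'),
        (1 - Real.cos (2 * Real.pi * τ)) • (h x' - x'))) :
    x = x' :=
  injective_add_smul_displacement_prod_smul_displacement h _
    (one_sub_cos_two_pi_mul_pos hτ).ne' heq
end

section
/- Let F : ℝ^p → ℝ^r be Lipschitz with constant L, and let k be a positive integer with k > L. Define the map R : ℝ^p × ℝ^r → ℝ^p × ℝ^r by R(x,y) = (0, F(x)/k). Then Lip(R) < 1, each layer id + R is injective, and the k-fold composition (id + R)^k maps (x, 0) to (x, F(x)). -/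
/-!
Each layer `z ↦ z + (0, g z.1)` is a shear: it never changes the first coordinate, so it is
injective and its `n`-th iterate sends `(x, y)` to `(x, y + n • g x)`. With `g = k⁻¹ • F` the
residual is `L / k`-Lipschitz, and `k` layers accumulate exactly `F x`.
-/

section Shear

variable {E G : Type*}

theorem LipschitzWith.zero_prodMk_comp_fst [PseudoEMetricSpace E] [Zero E]
    [PseudoEMetricSpace G] {K : NNReal} {f : E → G} (hf : LipschitzWith K f) :
    LipschitzWith K (fun z : E × G => ((0 : E), f z.1)) := by
  simpa using (LipschitzWith.const (0 : E)).prodMk (hf.comp LipschitzWith.prod_fst)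

theorem injective_add_zero_prodMk [AddZeroClass E] [AddGroup G] (f : E → G) :
    Function.Injective (fun z : E × G => z + ((0 : E), f z.1)) := by
  intro z w h
  obtain ⟨h₁, h₂⟩ := Prod.ext_iff.mp h
  simp only [Prod.fst_add, add_zero] at h₁
  simp only [Prod.snd_add, h₁, add_left_inj] at h₂
  exact Prod.ext h₁ h₂

theorem iterate_add_zero_prodMk_apply [AddZeroClass E] [AddMonoid G] (f : E → G)
    (n : ℕ) (x : E) (y : G) :
    (fun z : E × G => z + ((0 : E), f z.1))^[n] (x, y) = (x, y + n • f x) := by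
  induction n with
  | zero => simp
  | succ n ih =>
    rw [Function.iterate_succ_apply', ih, Prod.mk_add_mk, add_zero, succ_nsmul, add_assoc]

end Shear

/-- For `F : ℝ^p → ℝ^r` Lipschitz with constant `L` and integer `k > L`, the
residual `R(x,y) = (0, F x / k)` has Lipschitz constant `< 1`, each layer
`id + R` is injective, and the `k`-fold composition maps `(x,0)` to `(x, F x)`. -/
theorem iresnet_linear_cap_universal (p r : ℕ)
    (F : EuclideanSpace ℝ (Fin p) → EuclideanSpace ℝ (Fin r))
    (L : NNReal) (hF : LipschitzWith L F)
    (k : ℕ) (hk0 : 0 < k) (hkL : (L : ℝ) < k) :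
    (∃ K : NNReal, K < 1 ∧
      LipschitzWith K
        (fun z : EuclideanSpace ℝ (Fin p) × EuclideanSpace ℝ (Fin r) =>
          ((0 : EuclideanSpace ℝ (Fin p)), ((k : ℝ))⁻¹ • F z.1))) ∧
    Function.Injective
      (fun z : EuclideanSpace ℝ (Fin p) × EuclideanSpace ℝ (Fin r) =>
        z + ((0 : EuclideanSpace ℝ (Fin p)), ((k : ℝ))⁻¹ • F z.1)) ∧
    (∀ x : EuclideanSpace ℝ (Fin p),
      (fun z : EuclideanSpace ℝ (Fin p) × EuclideanSpace ℝ (Fin r) =>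
          z + ((0 : EuclideanSpace ℝ (Fin p)), ((k : ℝ))⁻¹ • F z.1))^[k]
        (x, 0) = (x, F x)) := by
  have hLk : LipschitzWith (L / k) fun x => (k : ℝ)⁻¹ • F x := by
    have hnorm : ‖(k : ℝ)⁻¹‖₊ = (k : NNReal)⁻¹ := by simp
    rw [div_eq_inv_mul, ← hnorm]
    exact (lipschitzWith_smul (k : ℝ)⁻¹).comp hF
  refine ⟨⟨L / k, NNReal.div_lt_one_of_lt (by exact_mod_cast hkL), hLk.zero_prodMk_comp_fst⟩,
    injective_add_zero_prodMk fun x => (k : ℝ)⁻¹ • F x, fun x => ?_⟩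
  rw [iterate_add_zero_prodMk_apply (fun x => (k : ℝ)⁻¹ • F x), zero_add,
    ← Nat.cast_smul_eq_nsmul ℝ, smul_inv_smul₀ (Nat.cast_ne_zero.mpr hk0.ne')]
end
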